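/- arXiv:2305.01304 — 2 statements merged into one kernel-verified Lean document; each statement's English description precedes it below -/
import Mathlib

section
/- Let N ≥ 1, let B be an abelian group, let f : ℤ^N → B, and let d ∈ ℕ be such that fdeg(f) ≤ d. Then for every x = (x_1, …, x_N) ∈ ℤ^N one has f(x) = Σ_{n ∈ ℕ^N, |n| ≤ d} (C(x_1, n_1)⋯C(x_N, n_N)) • Δ^n f(0). -/
/-!
Write `P_d f (x) = ∑_{|n| ≤ d} C(x, n) • Δ^n f(0)`. Pascal's rule
`C(t+1, k+1) - C(t, k+1) = C(t, k)` gives `Δ_i (P_{d+1} f) = P_d (Δ_i f)`, and `Δ_i f` has degree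
at most `d` when `f` has degree at most `d + 1`. By induction on `d`, `f` and `P_d f` therefore
have the same differences in every coordinate direction; as they also agree at `0` and the `e_i`
generate `ℤ^N`, they are equal.
-/

/-- The difference operator `Δ_a` sending `f` to `x ↦ f (x + a) - f x`. -/
def disc {A B : Type*} [AddCommGroup A] [AddCommGroup B] (a : A) (f : A → B) : A → B :=
  fun x => f (x + a) - f x

/-- Iterated difference operator `Δ_{a_1} ⋯ Δ_{a_k} f` along a list `[a_1, …, a_k]`. -/
def multiDisc {A B : Type*} [AddCommGroup A] [AddCommGroup B] : List A → (A → B) → (A → B)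
  | [], f => f
  | a :: l, f => disc a (multiDisc l f)

/-- `FdegLE f d` says that the functional degree of `f` is at most `d`, i.e. all
`(d+1)`-fold iterated differences of `f` vanish. -/
def FdegLE {A B : Type*} [AddCommGroup A] [AddCommGroup B] (f : A → B) (d : ℕ) : Prop :=
  ∀ l : List A, l.length = d + 1 → multiDisc l f = 0

/-- The multi-index iterated difference operator `Δ^n = Δ_1^{n_1} ⋯ Δ_N^{n_N}` on
functions `ℤ^N → B`, where `Δ_i = Δ_{e_i}` for the `i`-th standard basis vector. -/
def deltaPow {B : Type*} [AddCommGroup B] {N : ℕ} (n : Fin N → ℕ) (f : (Fin N → ℤ) → B) :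
    (Fin N → ℤ) → B :=
  ((List.ofFn fun i => (disc (Pi.single i (1 : ℤ)))^[n i]).foldr (· ∘ ·) id) f

open Finset Function

section Disc

variable {A B : Type*} [AddCommGroup A] [AddCommGroup B]

lemma disc_commute (a b : A) : Function.Commute (disc a : (A → B) → A → B) (disc b) := by
  intro f
  funext x
  simp only [disc]
  rw [add_right_comm x b a]
  abel

lemma multiDisc_append (l₁ l₂ : List A) (f : A → B) :
    multiDisc (l₁ ++ l₂) f = multiDisc l₁ (multiDisc l₂ f) := by
  induction l₁ with
  | nil => rfl
  | cons a l ih => simp only [List.cons_append, multiDisc, ih]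

lemma FdegLE.disc_eq_zero {f : A → B} (hf : FdegLE f 0) (a : A) : disc a f = 0 :=
  hf [a] rfl

lemma FdegLE.fdegLE_disc {f : A → B} {d : ℕ} (hf : FdegLE f (d + 1)) (a : A) :
    FdegLE (disc a f) d :=
  fun l hl => by simpa [multiDisc_append, multiDisc] using hf (l ++ [a]) (by simp [hl])

end Disc

lemma eq_of_forall_disc_single_eq {ι B : Type*} [Fintype ι] [DecidableEq ι] [AddCommGroup B]
    {f g : (ι → ℤ) → B} (h₀ : f 0 = g 0)
    (h : ∀ i, disc (Pi.single i 1) f = disc (Pi.single i 1) g) : f = g := by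
  have hsingle : ∀ i, Periodic (f - g) (Pi.single i 1) := fun i y => by
    simpa [disc, sub_eq_sub_iff_sub_eq_sub] using congrFun (h i) y
  have hper : ∀ x, Periodic (f - g) x := fun x => by
    rw [← univ_sum_single x]
    refine sum_induction _ _ (fun _ _ => Periodic.add_period) (periodic_with_period_zero _)
      fun i _ => ?_
    simpa [← Pi.single_smul] using (hsingle i).zsmul (x i)
  funext x
  simpa [sub_eq_zero, h₀] using (hper x).eq

section Iterate

lemma commute_foldr_comp {α : Type*} {D : α → α} {l : List (α → α)}
    (hD : ∀ g ∈ l, Function.Commute D g) : Function.Commute D (l.foldr (· ∘ ·) id) := by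
  induction l with
  | nil => exact Function.Commute.id_right
  | cons g l ih =>
    exact (hD g List.mem_cons_self).comp_right
      (ih fun g' hg' => hD g' (List.mem_cons_of_mem _ hg'))

lemma foldr_comp_modify_comp {α : Type*} {D : α → α} {l : List (α → α)}
    (hD : ∀ g ∈ l, Function.Commute D g) {i : ℕ} (hi : i < l.length) :
    (l.modify i (· ∘ D)).foldr (· ∘ ·) id = l.foldr (· ∘ ·) id ∘ D := by
  induction l generalizing i with
  | nil => simp at hi
  | cons g l ih =>
    have hl : ∀ g' ∈ l, Function.Commute D g' :=
      fun g' hg' => hD g' (List.mem_cons_of_mem _ hg')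
    cases i with
    | zero =>
      simp only [List.modify_zero_cons, List.foldr_cons]
      rw [comp_assoc, (commute_foldr_comp hl).comp_eq]
      rfl
    | succ i =>
      simp only [List.modify_succ_cons, List.foldr_cons]
      rw [ih hl (by simpa using hi)]
      rfl

end Iterate

section DeltaPow

variable {B : Type*} [AddCommGroup B] {N : ℕ}

lemma deltaPow_zero (f : (Fin N → ℤ) → B) : deltaPow 0 f = f := by
  have hid : ∀ k,
      (List.replicate k id).foldr (· ∘ ·) id = (id : ((Fin N → ℤ) → B) → _) :=
    fun k => by induction k <;> simp_all [List.replicate_succ]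
  simp [deltaPow, hid]

lemma deltaPow_add_single (n : Fin N → ℕ) (i : Fin N) (f : (Fin N → ℤ) → B) :
    deltaPow (n + Pi.single i 1) f = deltaPow n (disc (Pi.single i 1) f) := by
  have hops : (List.ofFn fun j =>
        (disc (B := B) (Pi.single j (1 : ℤ)))^[(n + Pi.single i 1 : Fin N → ℕ) j])
      = (List.ofFn fun j => (disc (Pi.single j 1))^[n j]).modify i
          (· ∘ disc (Pi.single i 1)) := by
    refine List.ext_getElem (by simp) fun k hk _ => ?_
    simp only [List.getElem_modify, List.getElem_ofFn]
    split_ifs with h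
    · subst h
      simp [iterate_succ]
    · simp [Fin.ext_iff, Ne.symm h]
  rw [deltaPow, hops, foldr_comp_modify_comp _ (by simp)]
  · rfl
  · simp only [List.mem_ofFn, forall_exists_index]
    rintro _ j rfl
    exact (disc_commute _ _).iterate_right _

end DeltaPow

def multiIndicesOfDegLE (ι : Type*) [Fintype ι] [DecidableEq ι] (d : ℕ) :
    Finset (ι → ℕ) :=
  (Iic fun _ : ι => d).filter fun n => ∑ i, n i ≤ d

section MultiIndex

variable {ι : Type*} [Fintype ι] [DecidableEq ι]

lemma mem_multiIndicesOfDegLE {d : ℕ} {n : ι → ℕ} :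
    n ∈ multiIndicesOfDegLE ι d ↔ ∑ i, n i ≤ d := by
  simp only [multiIndicesOfDegLE, mem_filter, mem_Iic, and_iff_right_iff_imp]
  exact fun h i => (single_le_sum (fun j _ => Nat.zero_le (n j)) (mem_univ i)).trans h

lemma sum_add_single_one (n : ι → ℕ) (i : ι) :
    ∑ j, (n + Pi.single i 1 : ι → ℕ) j = ∑ j, n j + 1 := by
  simp [sum_add_distrib]

lemma sum_multiIndicesOfDegLE_succ {M : Type*} [AddCommMonoid M] (d : ℕ) (i : ι)
    {g : (ι → ℕ) → M} (hg : ∀ n, n i = 0 → g n = 0) :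
    ∑ n ∈ multiIndicesOfDegLE ι (d + 1), g n
      = ∑ m ∈ multiIndicesOfDegLE ι d, g (m + Pi.single i 1) := by
  rw [← sum_image fun _ _ _ _ h => add_right_cancel h]
  refine (sum_subset (fun n hn => ?_) fun n hn hn' => hg n ?_).symm
  · obtain ⟨m, hm, rfl⟩ := mem_image.mp hn
    rw [mem_multiIndicesOfDegLE, sum_add_single_one] at *
    omega
  · by_contra hni
    have hsplit : n - Pi.single i 1 + Pi.single i 1 = n := by
      funext j
      by_cases hj : j = i
      · subst hj
        simp only [Pi.add_apply, Pi.sub_apply, Pi.single_eq_same]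
        omega
      · simp [Pi.single_eq_of_ne hj]
    refine hn' (mem_image.mpr ⟨n - Pi.single i 1, ?_, hsplit⟩)
    have hsum := sum_add_single_one (n - Pi.single i 1) i
    rw [hsplit] at hsum
    rw [mem_multiIndicesOfDegLE] at hn ⊢
    omega

lemma prod_choose_add_single_of_eq_zero (x : ι → ℤ) {n : ι → ℕ} {i : ι} (hn : n i = 0) :
    ∏ j, Ring.choose ((x + Pi.single i 1 : ι → ℤ) j) (n j)
      = ∏ j, Ring.choose (x j) (n j) := by
  refine prod_congr rfl fun j _ => ?_
  by_cases hj : j = i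
  · subst hj
    simp [hn]
  · simp [Pi.single_eq_of_ne hj]

lemma prod_choose_add_single_sub (x : ι → ℤ) (n : ι → ℕ) (i : ι) :
    ∏ j, Ring.choose ((x + Pi.single i 1 : ι → ℤ) j) ((n + Pi.single i 1 : ι → ℕ) j)
      - ∏ j, Ring.choose (x j) ((n + Pi.single i 1 : ι → ℕ) j)
      = ∏ j, Ring.choose (x j) (n j) := by
  have hrest : ∀ c : ℤ, ∏ j ∈ {i}ᶜ, Ring.choose ((x + Pi.single i c : ι → ℤ) j)
      ((n + Pi.single i 1 : ι → ℕ) j) = ∏ j ∈ {i}ᶜ, Ring.choose (x j) (n j) :=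
    fun c => prod_congr rfl fun j hj => by
      simp [Pi.single_eq_of_ne (mem_compl.mp hj ∘ mem_singleton.mpr)]
  have h0 := hrest 0
  simp only [Pi.single_zero, add_zero] at h0
  rw [Fintype.prod_eq_mul_prod_compl i, Fintype.prod_eq_mul_prod_compl i, hrest, h0,
    Fintype.prod_eq_mul_prod_compl i, ← sub_mul]
  simp [Ring.choose_succ_succ]

end MultiIndex

section Newton

variable {B : Type*} [AddCommGroup B] {N : ℕ}

def newtonInterp (d : ℕ) (f : (Fin N → ℤ) → B) (x : Fin N → ℤ) : B :=
  ∑ n ∈ multiIndicesOfDegLE (Fin N) d, (∏ i, Ring.choose (x i) (n i)) • deltaPow n f 0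

lemma newtonInterp_apply_zero (d : ℕ) (f : (Fin N → ℤ) → B) : newtonInterp d f 0 = f 0 := by
  rw [newtonInterp, sum_eq_single_of_mem 0 (mem_multiIndicesOfDegLE.mpr (by simp))]
  · simp [deltaPow_zero]
  · intro n _ hn
    obtain ⟨i, hi⟩ := Function.ne_iff.mp hn
    rw [prod_eq_zero (mem_univ i) (Ring.choose_zero_pos ℤ (Nat.pos_of_ne_zero hi)), zero_smul]

lemma newtonInterp_zero (f : (Fin N → ℤ) → B) : newtonInterp 0 f = fun _ => f 0 := by
  funext x
  rw [newtonInterp, sum_eq_single_of_mem 0 (mem_multiIndicesOfDegLE.mpr (by simp))]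
  · simp [deltaPow_zero]
  · intro n hn hn0
    have hsum := Nat.le_zero.mp (mem_multiIndicesOfDegLE.mp hn)
    exact absurd (funext fun i => sum_eq_zero_iff.mp hsum i (mem_univ i)) hn0

lemma disc_newtonInterp (d : ℕ) (f : (Fin N → ℤ) → B) (i : Fin N) :
    disc (Pi.single i 1) (newtonInterp (d + 1) f) = newtonInterp d (disc (Pi.single i 1) f) := by
  funext x
  simp only [disc, newtonInterp, ← sum_sub_distrib, ← sub_smul]
  rw [sum_multiIndicesOfDegLE_succ d i fun n hn => by
    rw [prod_choose_add_single_of_eq_zero x hn, sub_self, zero_smul]]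
  refine sum_congr rfl fun m _ => ?_
  rw [prod_choose_add_single_sub, deltaPow_add_single]

theorem FdegLE.eq_newtonInterp {d : ℕ} {f : (Fin N → ℤ) → B} (hf : FdegLE f d) :
    f = newtonInterp d f := by
  induction d generalizing f with
  | zero =>
    refine eq_of_forall_disc_single_eq (newtonInterp_apply_zero 0 f).symm fun i => ?_
    rw [hf.disc_eq_zero, newtonInterp_zero]
    funext x
    simp [disc]
  | succ d ih =>
    refine eq_of_forall_disc_single_eq (newtonInterp_apply_zero _ f).symm fun i => ?_
    rw [disc_newtonInterp, ← ih (hf.fdegLE_disc _)]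

end Newton

theorem fundamental_representation_of_fdegLE_general
    (N : ℕ) {B : Type*} [AddCommGroup B] (f : (Fin N → ℤ) → B)
    (d : ℕ) (hdeg : FdegLE f d) :
    ∀ x : Fin N → ℤ,
      f x = ∑ n ∈ (Finset.Iic fun _ : Fin N => d).filter (fun n => ∑ i, n i ≤ d),
        (∏ i, Ring.choose (x i) (n i)) • deltaPow n f 0 :=
  congrFun hdeg.eq_newtonInterp

/-- **The fundamental representation (Theorem 2.8b).** If `f : ℤ^N → B` has functional
degree at most `d`, then for every `x ∈ ℤ^N` one has
`f x = ∑_{|n| ≤ d} (C(x_1,n_1)⋯C(x_N,n_N)) • Δ^n f(0)`, where `C(x, n) = Ring.choose x n`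
is the integer-valued binomial coefficient. -/
theorem fundamental_representation_of_fdegLE
    (N : ℕ) (hN : 1 ≤ N) {B : Type*} [AddCommGroup B] (f : (Fin N → ℤ) → B)
    (d : ℕ) (hdeg : FdegLE f d) :
    ∀ x : Fin N → ℤ,
      f x = ∑ n ∈ (Finset.Iic fun _ : Fin N => d).filter (fun n => ∑ i, n i ≤ d),
        (∏ i, Ring.choose (x i) (n i)) • deltaPow n f 0 :=
  fundamental_representation_of_fdegLE_general N f d hdeg
end

section
/- Let p be a prime and let R be a commutative ring of characteristic p. Let n ≥ 1 and let f ∈ R[t_1, …, t_n] be a nonzero polynomial, with associated evaluation function E(f) : R^n → R, x ↦ f(x). Then fdeg(E(f)) ≤ σ_p(f), where σ_p(f) is the p-weight degree of f. In particular, fdeg(E(f)) ≤ d holds for d := σ_p(f). -/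
/-- The `p`-weight degree `σ_p(f)` of a multivariate polynomial: the maximum over the
monomials `t_1^{d_1} ⋯ t_n^{d_n}` occurring in `f` (with nonzero coefficient) of
`σ_p(d_1) + ⋯ + σ_p(d_n)`, where `σ_p(d)` is the sum of the base-`p` digits of `d`. -/
def pWeightDeg (p : ℕ) {R : Type*} [CommSemiring R] {n : ℕ}
    (f : MvPolynomial (Fin n) R) : ℕ :=
  f.support.sup fun m => ∑ i, (Nat.digits p (m i)).sum

/-!
The difference operator satisfies the Leibniz rule
`Δ_a (f g) = Δ_a f · g(· + a) + f · Δ_a g`, so functional degree is subadditive under products.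
Additive maps have degree at most `1`; in characteristic `p` this applies to the coordinate
projections and to Frobenius `t ↦ t ^ p`. Writing `d = ∑ d_k p^k` in base `p`,
`t ^ d = ∏ (t ^ p^k) ^ d_k` therefore has degree at most `∑ d_k = σ_p(d)`, a monomial
`∏ t_i ^ m_i` has degree at most `∑ σ_p(m_i)`, and `E(f)` is a linear combination of monomials.
-/

section AddCommGroup

variable {A B : Type*} [AddCommGroup A] [AddCommGroup B]

lemma multiDisc_append_singleton (l : List A) (a : A) (f : A → B) :
    multiDisc (l ++ [a]) f = multiDisc l (disc a f) := by
  induction l with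
  | nil => rfl
  | cons b l ih => exact congrArg (disc b) ih

lemma multiDisc_add (l : List A) (f g : A → B) :
    multiDisc l (f + g) = multiDisc l f + multiDisc l g := by
  induction l with
  | nil => rfl
  | cons a l ih => funext x; simp only [multiDisc, disc, ih, Pi.add_apply]; abel

lemma multiDisc_zero (l : List A) : multiDisc l (0 : A → B) = 0 := by
  induction l with
  | nil => rfl
  | cons a l ih => funext x; simp [multiDisc, disc, ih]

lemma multiDisc_comp_add_right (l : List A) (a : A) (f : A → B) :
    multiDisc l (fun x => f (x + a)) = fun x => multiDisc l f (x + a) := by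
  induction l with
  | nil => rfl
  | cons b l ih => funext x; simp only [multiDisc, disc, ih, add_right_comm]

lemma multiDisc_comp_addMonoidHom {A' : Type*} [AddCommGroup A'] (φ : A →+ A') (l : List A)
    (g : A' → B) : multiDisc l (g ∘ φ) = multiDisc (l.map φ) g ∘ φ := by
  induction l with
  | nil => rfl
  | cons a l ih => funext x; simp [multiDisc, disc, ih]

lemma multiDisc_addMonoidHom_comp {B' : Type*} [AddCommGroup B'] (ψ : B →+ B') (l : List A)
    (f : A → B) : multiDisc l (ψ ∘ f) = ψ ∘ multiDisc l f := by
  induction l with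
  | nil => rfl
  | cons a l ih => funext x; simp [multiDisc, disc, ih]

variable {f g : A → B} {d e : ℕ}

lemma fdegLE_zero_fun (d : ℕ) : FdegLE (0 : A → B) d := fun l _ => multiDisc_zero l

lemma fdegLE_const (c : B) : FdegLE (fun _ : A => c) 0 := by
  rintro (_ | ⟨a, _ | _⟩) hl
  · simp at hl
  · funext x; simp [multiDisc, disc]
  · simp at hl

lemma FdegLE.eq_const (hf : FdegLE f 0) : f = fun _ => f 0 := by
  funext x
  simpa [multiDisc, disc, sub_eq_zero] using congrFun (hf [x] rfl) 0

lemma FdegLE.add (hf : FdegLE f d) (hg : FdegLE g d) : FdegLE (f + g) d := fun l hl => by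
  rw [multiDisc_add, hf l hl, hg l hl, add_zero]

lemma FdegLE.sum {ι : Type*} (s : Finset ι) {f : ι → A → B} (h : ∀ i ∈ s, FdegLE (f i) d) :
    FdegLE (∑ i ∈ s, f i) d :=
  Finset.sum_induction f (FdegLE · d) (fun _ _ => FdegLE.add) (fdegLE_zero_fun d) h

lemma FdegLE.succ (hf : FdegLE f d) : FdegLE f (d + 1) := by
  rintro (_ | ⟨a, l⟩) hl
  · simp at hl
  · funext x; simp [multiDisc, disc, hf l (by simpa using hl)]

lemma FdegLE.mono (hf : FdegLE f d) (hde : d ≤ e) : FdegLE f e :=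
  Nat.le_induction hf (fun _ _ => FdegLE.succ) e hde

lemma fdegLE_succ_iff : FdegLE f (d + 1) ↔ ∀ a, FdegLE (disc a f) d := by
  constructor
  · intro hf a l hl
    rw [← multiDisc_append_singleton]
    exact hf _ (by simp [hl])
  · intro hf l hl
    obtain ⟨l, a, rfl⟩ := (l.eq_nil_or_concat).resolve_left (by rintro rfl; simp at hl)
    rw [List.concat_eq_append, multiDisc_append_singleton]
    exact hf a l (by simpa using hl)

lemma fdegLE_addMonoidHom (φ : A →+ B) : FdegLE φ 1 := by
  refine fdegLE_succ_iff.mpr fun a => ?_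
  have : disc a φ = fun _ => φ a := by funext x; simp [disc]
  exact this ▸ fdegLE_const (φ a)

lemma FdegLE.comp_add_right (hf : FdegLE f d) (a : A) : FdegLE (fun x => f (x + a)) d :=
  fun l hl => by rw [multiDisc_comp_add_right, hf l hl]; rfl

lemma FdegLE.comp_addMonoidHom {A' : Type*} [AddCommGroup A'] {g : A' → B} (hg : FdegLE g d)
    (φ : A →+ A') : FdegLE (g ∘ φ) d :=
  fun l hl => by rw [multiDisc_comp_addMonoidHom, hg _ (by simpa using hl)]; rfl

lemma FdegLE.addMonoidHom_comp {B' : Type*} [AddCommGroup B'] (ψ : B →+ B') (hf : FdegLE f d) :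
    FdegLE (ψ ∘ f) d :=
  fun l hl => by rw [multiDisc_addMonoidHom_comp, hf l hl]; funext x; simp

end AddCommGroup

section Ring

variable {A R : Type*} [AddCommGroup A] [Ring R]

lemma disc_mul (a : A) (f g : A → R) :
    disc a (f * g) = disc a f * (fun x => g (x + a)) + f * disc a g := by
  funext x; simp only [disc, Pi.add_apply, Pi.mul_apply]; noncomm_ring

theorem FdegLE.mul {f g : A → R} {d e : ℕ} (hf : FdegLE f d) (hg : FdegLE g e) :
    FdegLE (f * g) (d + e) := by
  induction d generalizing f g e with
  | zero =>
    rw [hf.eq_const, zero_add]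
    exact hg.addMonoidHom_comp (AddMonoidHom.mulLeft (f 0))
  | succ d ihd =>
    induction e generalizing g with
    | zero =>
      rw [hg.eq_const, add_zero]
      exact hf.addMonoidHom_comp (AddMonoidHom.mulRight (g 0))
    | succ e ihe =>
      rw [← add_assoc]
      refine fdegLE_succ_iff.mpr fun a => ?_
      rw [disc_mul]
      refine FdegLE.add ?_ ?_
      · exact (ihd (fdegLE_succ_iff.mp hf a) (hg.comp_add_right a)).mono (by omega)
      · exact (ihe (fdegLE_succ_iff.mp hg a)).mono (by omega)

theorem FdegLE.pow {f : A → R} {d : ℕ} (hf : FdegLE f d) (c : ℕ) : FdegLE (f ^ c) (c * d) := by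
  induction c with
  | zero => rw [pow_zero, zero_mul]; exact fdegLE_const (1 : R)
  | succ c ih => rw [pow_succ, Nat.succ_mul]; exact ih.mul hf

end Ring

section CommRing

variable {R : Type*} [CommRing R]

theorem FdegLE.prod {A ι : Type*} [AddCommGroup A] (s : Finset ι) {f : ι → A → R} {d : ι → ℕ}
    (h : ∀ i ∈ s, FdegLE (f i) (d i)) : FdegLE (∏ i ∈ s, f i) (∑ i ∈ s, d i) := by
  induction s using Finset.cons_induction with
  | empty => exact fdegLE_const (A := A) (1 : R)
  | cons i s hi ih =>
    rw [Finset.prod_cons, Finset.sum_cons]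
    exact (h i (s.mem_cons_self i)).mul (ih fun j hj => h j (Finset.mem_cons_of_mem hj))

variable (p : ℕ) [ExpChar R p]

theorem fdegLE_pow_ofDigits (L : List ℕ) :
    FdegLE (fun t : R => t ^ Nat.ofDigits p L) L.sum := by
  induction L with
  | nil => simpa using fdegLE_const (A := R) (1 : R)
  | cons c L ih =>
    have hsplit : (fun t : R => t ^ Nat.ofDigits p (c :: L))
        = ⇑(AddMonoidHom.id R) ^ c * ((fun t => t ^ Nat.ofDigits p L) ∘ frobenius R p) := by
      funext t; simp [Nat.ofDigits_cons, frobenius_def, pow_add, pow_mul]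
    rw [hsplit, List.sum_cons]
    have h := ((fdegLE_addMonoidHom (AddMonoidHom.id R)).pow c).mul
      (ih.comp_addMonoidHom (frobenius R p).toAddMonoidHom)
    rwa [mul_one] at h

theorem fdegLE_pow_digits_sum (d : ℕ) : FdegLE (fun t : R => t ^ d) (Nat.digits p d).sum := by
  simpa [Nat.ofDigits_digits] using fdegLE_pow_ofDigits (R := R) p (Nat.digits p d)

theorem fdegLE_monomial_eval {σ : Type*} [Fintype σ] (m : σ →₀ ℕ) :
    FdegLE (fun x : σ → R => ∏ i, x i ^ m i) (∑ i, (Nat.digits p (m i)).sum) := by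
  rw [← Finset.prod_fn]
  exact FdegLE.prod _ fun i _ =>
    (fdegLE_pow_digits_sum p (m i)).comp_addMonoidHom (Pi.evalAddMonoidHom (fun _ => R) i)

theorem fdegLE_eval {σ : Type*} [Fintype σ] (f : MvPolynomial σ R) :
    FdegLE (fun x => MvPolynomial.eval x f)
      (f.support.sup fun m => ∑ i, (Nat.digits p (m i)).sum) := by
  have hsum : (fun x => MvPolynomial.eval x f)
      = ∑ m ∈ f.support, fun x => MvPolynomial.coeff m f * ∏ i, x i ^ m i := by
    funext x; simp [MvPolynomial.eval_eq', Finset.sum_apply]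
  rw [hsum]
  refine FdegLE.sum _ fun m hm => ?_
  have hterm := (fdegLE_monomial_eval p m).addMonoidHom_comp
    (AddMonoidHom.mulLeft (MvPolynomial.coeff m f))
  exact hterm.mono (Finset.le_sup (f := fun m : σ →₀ ℕ => ∑ i, (Nat.digits p (m i)).sum) hm)

end CommRing

theorem fdeg_eval_le_pWeightDeg_general
    (p : ℕ) (hp : p.Prime) (R : Type*) [CommRing R] [CharP R p]
    (n : ℕ) (f : MvPolynomial (Fin n) R) :
    FdegLE (fun x => MvPolynomial.eval x f) (pWeightDeg p f) :=
  have := ExpChar.prime (R := R) hp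
  fdegLE_eval p f

/-- **Proposition 4.3.** If `R` is a commutative ring of prime characteristic `p` and
`f ∈ R[t_1, …, t_n]` is a nonzero polynomial, then the functional degree of the
evaluation function `E(f) : R^n → R` is at most the `p`-weight degree `σ_p(f)`. -/
theorem fdeg_eval_le_pWeightDeg
    (p : ℕ) (hp : p.Prime) (R : Type*) [CommRing R] [CharP R p]
    (n : ℕ) (hn : 1 ≤ n) (f : MvPolynomial (Fin n) R) (hf : f ≠ 0) :
    FdegLE (fun x => MvPolynomial.eval x f) (pWeightDeg p f) :=
  fdeg_eval_le_pWeightDeg_general p hp R n f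
end
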